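/- Let π, G, V, p, H, G*, K be as in the minimal counterexample setup. Then every minimal normal subgroup of G* is a π-group, and hence is contained in K. -/

import Mathlib

/-- A subgroup is a `π`-group if every prime dividing its order lies in `π`. -/
def IsPiGroup (π : Set ℕ) {G : Type*} [Group G] (H : Subgroup G) : Prop :=
  ∀ p : ℕ, p.Prime → p ∣ Nat.card H → p ∈ π

/-- A subgroup is `π`-maximal if it is a `π`-group not properly contained
in any `π`-subgroup. -/
def IsPiMaximal (π : Set ℕ) {G : Type*} [Group G] (H : Subgroup G) : Prop :=
  IsPiGroup π H ∧ ∀ K : Subgroup G, IsPiGroup π K → H ≤ K → K = H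

/-- `A` is normal in `B` (as subgroups of an ambient group). -/
def NormalIn {G : Type*} [Group G] (A B : Subgroup G) : Prop :=
  A ≤ B ∧ ∀ b ∈ B, ∀ a ∈ A, b * a * b⁻¹ ∈ A

/-- A subgroup is subnormal if it is connected to the whole group by a
finite chain, each term normal in the next. -/
def IsSubnormal {G : Type*} [Group G] (A : Subgroup G) : Prop :=
  Relation.ReflTransGen NormalIn A ⊤

/-- A witness to the `π`-submaximality of `H ≤ G`: a finite group `carrier`,
an embedding `ε : G → carrier` with subnormal image, and a `π`-maximal
subgroup `K` of `carrier` with `ε(H) = ε(G) ∩ K`. -/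
structure PiSubmaximalWitness (π : Set ℕ) (G : Type u) [Group G] (H : Subgroup G) :
    Type (u + 1) where
  carrier : Type u
  [grp : Group carrier]
  [fin : Finite carrier]
  ε : G →* carrier
  inj : Function.Injective ε
  subnormal : IsSubnormal ε.range
  K : Subgroup carrier
  maxK : IsPiMaximal π K
  eq : H.map ε = ε.range ⊓ K

/-- A subgroup `H ≤ G` is `π`-submaximal if `G` embeds as a subnormal subgroup into a
finite group `G*` in which a `π`-maximal subgroup intersects `G` in `H`. -/
def IsPiSubmaximal (π : Set ℕ) {G : Type u} [Group G] (H : Subgroup G) : Prop :=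
  Nonempty (PiSubmaximalWitness π G H)

/-- A minimal normal subgroup: nontrivial, normal, containing no nontrivial
proper normal subgroup of the ambient group. -/
def IsMinimalNormal {G : Type*} [Group G] (U : Subgroup G) : Prop :=
  U.Normal ∧ U ≠ ⊥ ∧ ∀ M : Subgroup G, M.Normal → M ≤ U → M = ⊥ ∨ M = U

/-!
By minimality of `G*`, `G* = ⟨G, K⟩`, since otherwise `⟨G, K⟩` would be a smaller witness. The
subnormal `p`-subgroup `V` lies in a normal `p`-subgroup `W` of `G*`. Let `U` be minimal normal
in `G*`. If `U ∩ G ≠ 1`, it is a nontrivial normal subgroup of `G`, so it contains `V`; then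
`U ∩ W ≠ 1` and `U ≤ W` is a `p`-group. If `U ∩ G = 1`, Wielandt's theorem (a minimal normal
subgroup normalizes every subnormal subgroup) gives `[U, G] ≤ U ∩ G = 1`, so `G ≤ C = C_{G*}(U)`
and `G*/C`, a quotient of `K`, is a `π`-group. If `U ∩ C = 1`, then `U` embeds in `G*/C`.
Otherwise `U` is abelian, hence an elementary abelian `r`-group; if `r ∉ π`, then `G*/U` with a
`π`-maximal subgroup over `KU/U` is a smaller witness, by a Schur–Zassenhaus argument in the
centralizer of `U`. Finally, a normal `π`-subgroup lies in every `π`-maximal subgroup.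
-/

section NormalIn

open Subgroup Relation
open scoped commutatorElement

variable {Γ : Type*} [Group Γ] {A B C : Subgroup Γ}

lemma normalIn_iff_le_normalizer : NormalIn A B ↔ A ≤ B ∧ B ≤ normalizer (A : Set Γ) :=
  ⟨fun h => ⟨h.1, (normal_subgroupOf_iff_le_normalizer h.1).1
      ((normal_subgroupOf_iff h.1).2 fun a b ha hb => h.2 b hb a ha)⟩,
    fun h => ⟨h.1, fun b hb a ha =>
      (normal_subgroupOf_iff h.1).1 ((normal_subgroupOf_iff_le_normalizer h.1).2 h.2) a b ha hb⟩⟩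

lemma normalIn_refl (A : Subgroup Γ) : NormalIn A A :=
  normalIn_iff_le_normalizer.2 ⟨le_rfl, le_normalizer⟩

lemma normalIn_top_iff : NormalIn A ⊤ ↔ A.Normal := by
  rw [normalIn_iff_le_normalizer, top_le_iff, normalizer_eq_top_iff]
  exact and_iff_right le_top

lemma NormalIn.of_le (h : NormalIn A C) (hAB : A ≤ B) (hBC : B ≤ C) : NormalIn A B :=
  ⟨hAB, fun b hb => h.2 b (hBC hb)⟩

lemma NormalIn.inf (hA : NormalIn A C) (hB : NormalIn B C) : NormalIn (A ⊓ B) C :=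
  ⟨inf_le_left.trans hA.1, fun c hc _ hx => ⟨hA.2 c hc _ hx.1, hB.2 c hc _ hx.2⟩⟩

lemma NormalIn.sup (hA : NormalIn A C) (hB : NormalIn B C) : NormalIn (A ⊔ B) C := by
  rw [normalIn_iff_le_normalizer] at *
  exact ⟨sup_le hA.1 hB.1,
    (le_inf hA.2 hB.2).trans (normalizer_inf_normalizer_le_normalizer_sup A B)⟩

lemma NormalIn.map {Δ : Type*} [Group Δ] (f : Γ →* Δ) (h : NormalIn A B) :
    NormalIn (A.map f) (B.map f) := by
  refine ⟨map_mono h.1, ?_⟩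
  rintro _ ⟨b, hb, rfl⟩ _ ⟨a, ha, rfl⟩
  exact ⟨b * a * b⁻¹, h.2 b hb a ha, by simp⟩

lemma NormalIn.map_conj_eq (h : NormalIn A B) {m : Γ} (hm : m ∈ B) :
    A.map (MulAut.conj m).toMonoidHom = A :=
  le_antisymm (by rintro _ ⟨a, ha, rfl⟩; exact h.2 m hm a ha) fun a ha =>
    ⟨m⁻¹ * a * m, by simpa using h.2 m⁻¹ (inv_mem hm) a ha, by simp [mul_assoc]⟩

lemma _root_.Relation.ReflTransGen.le_of_normalIn (h : ReflTransGen NormalIn A B) : A ≤ B := by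
  induction h with
  | refl => exact le_rfl
  | tail _ hBC ih => exact ih.trans hBC.1

lemma isSubnormal_iff_subgroup_isSubnormal : _root_.IsSubnormal A ↔ A.IsSubnormal := by
  refine ⟨fun h => ?_, fun h => ?_⟩
  · induction h using ReflTransGen.head_induction_on with
    | refl => exact .top
    | head hAB _ ih =>
      exact .step _ _ hAB.1 ih ((normal_subgroupOf_iff hAB.1).2 fun a b ha hb => hAB.2 b hb a ha)
  · induction h with
    | top => exact .refl
    | step H K hHK _ hN ih =>
      exact .head ⟨hHK, fun b hb a ha => (normal_subgroupOf_iff hHK).1 hN a b ha hb⟩ ih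

lemma commute_of_inf_eq_bot (hAB : A ≤ normalizer (B : Set Γ)) (hBA : B ≤ normalizer (A : Set Γ))
    (h : A ⊓ B = ⊥) {a b : Γ} (ha : a ∈ A) (hb : b ∈ B) : Commute a b := by
  have hA : a * (b * a⁻¹ * b⁻¹) ∈ A :=
    mul_mem ha ((mem_normalizer_iff.1 (hBA hb) _).1 (inv_mem ha))
  have hB : a * b * a⁻¹ * b⁻¹ ∈ B :=
    mul_mem ((mem_normalizer_iff.1 (hAB ha) _).1 hb) (inv_mem hb)
  have hAB' : ⁅a, b⁆ ∈ A ⊓ B :=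
    mem_inf.2 ⟨by simpa only [commutatorElement_def, mul_assoc] using hA, hB⟩
  rwa [h, mem_bot, commutatorElement_eq_one_iff_commute] at hAB'

end NormalIn

section Subnormal

open Subgroup Relation

variable {Γ : Type*} [Group Γ] {A M N S : Subgroup Γ}

def IsMinimalNormalIn (N M : Subgroup Γ) : Prop :=
  Minimal (fun X => NormalIn X M ∧ X ≠ ⊥) N

lemma isMinimalNormal_iff_isMinimalNormalIn_top {U : Subgroup Γ} :
    IsMinimalNormal U ↔ IsMinimalNormalIn U ⊤ := by
  simp only [IsMinimalNormal, IsMinimalNormalIn, Minimal, normalIn_top_iff]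
  refine ⟨fun ⟨hn, hne, h⟩ => ⟨⟨hn, hne⟩, fun X hX hXU => ?_⟩,
    fun ⟨⟨hn, hne⟩, h⟩ => ⟨hn, hne, fun X hX hXU => ?_⟩⟩
  · exact ((h X hX.1 hXU).resolve_left hX.2).ge
  · by_cases hX' : X = ⊥
    · exact .inl hX'
    · exact .inr (le_antisymm hXU (h ⟨hX, hX'⟩ hXU))

lemma IsMinimalNormalIn.map_conj (hN : IsMinimalNormalIn N A) (hAM : NormalIn A M) {m : Γ}
    (hm : m ∈ M) : IsMinimalNormalIn (N.map (MulAut.conj m).toMonoidHom) A := by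
  have hconj : ∀ {g : Γ}, g ∈ M → ∀ {X : Subgroup Γ}, NormalIn X A →
      NormalIn (X.map (MulAut.conj g).toMonoidHom) A := fun hg X hX =>
    hAM.map_conj_eq hg ▸ hX.map _
  have hinj : ∀ g : Γ, Function.Injective (MulAut.conj g).toMonoidHom :=
    fun g => (MulAut.conj g).injective
  have hback : ∀ X : Subgroup Γ,
      (X.map (MulAut.conj m⁻¹).toMonoidHom).map (MulAut.conj m).toMonoidHom = X := fun X => by
    rw [Subgroup.map_map]; ext; simp [mul_assoc]
  refine ⟨⟨hconj hm hN.1.1, fun h => hN.1.2 ((map_eq_bot_iff_of_injective _ (hinj m)).1 h)⟩,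
    fun X hX hXN => ?_⟩
  rw [← hback X]
  refine map_mono (hN.2 ⟨hconj (inv_mem hm) hX.1, fun h => hX.2 ?_⟩ ?_)
  · rw [← hback X, h, Subgroup.map_bot]
  · rwa [← map_le_map_iff_of_injective (hinj m), hback]

variable [Finite Γ]

lemma NormalIn.exists_isMinimalNormalIn_le (hN : NormalIn N M) (hne : N ≠ ⊥) :
    ∃ N₀ ≤ N, IsMinimalNormalIn N₀ M :=
  exists_minimal_le_of_wellFoundedLT _ N ⟨hN, hne⟩

theorem IsMinimalNormalIn.le_normalizer (hS : ReflTransGen NormalIn S M)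
    (hN : IsMinimalNormalIn N M) : N ≤ normalizer (S : Set Γ) := by
  induction hS generalizing N with
  | refl => exact hN.1.1.1.trans le_normalizer
  | @tail A M hSA hAM ih =>
    by_cases hNA : N ⊓ A = ⊥
    · have hNC : N ≤ centralizer (A : Set Γ) := fun n hn a ha =>
        (commute_of_inf_eq_bot (hN.1.1.1.trans (normalIn_iff_le_normalizer.1 hAM).2)
          (hAM.1.trans (normalIn_iff_le_normalizer.1 hN.1.1).2) hNA hn ha).symm.eq
      exact hNC.trans ((centralizer_le (hSA.le_of_normalIn)).trans (centralizer_le_normalizer _))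
    have hNA' : N ≤ A := (hN.eq_of_le ⟨hN.1.1.inf hAM, hNA⟩ inf_le_left).ge.trans inf_le_right
    obtain ⟨N₀, hN₀N, hN₀⟩ := (hN.1.1.of_le hNA' hAM.1).exists_isMinimalNormalIn_le hN.1.2
    -- `T` is normal in `M` and contains `N₀` (by induction), so `T = N` by minimality
    let T : Subgroup Γ :=
      N ⊓ ⨅ m : M, (normalizer (S : Set Γ)).comap (MulAut.conj (m : Γ)).toMonoidHom
    have hT : NormalIn T M := by
      refine ⟨inf_le_left.trans hN.1.1.1, fun b hb x hx => ?_⟩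
      simp only [T, mem_inf, mem_iInf, mem_comap] at hx ⊢
      refine ⟨hN.1.1.2 b hb x hx.1, fun m => ?_⟩
      simpa [mul_assoc] using hx.2 ⟨m * b, mul_mem m.2 hb⟩
    have hN₀T : N₀ ≤ T := fun x hx => mem_inf.2 ⟨hN₀N hx, mem_iInf.2 fun m =>
      ih (hN₀.map_conj hAM m.2) ⟨x, hx, rfl⟩⟩
    have hTN : N ≤ T :=
      hN.2 ⟨hT, fun h => hN₀.1.2 (le_bot_iff.1 (h ▸ hN₀T))⟩ inf_le_left
    intro n hn
    simpa using (mem_iInf.1 (mem_inf.1 (hTN hn)).2) 1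

theorem exists_normalIn_isPGroup_ge {p : ℕ} {P : Subgroup Γ} (hP : ReflTransGen NormalIn P M)
    (hPp : IsPGroup p P) : ∃ W, NormalIn W M ∧ IsPGroup p W ∧ P ≤ W := by
  induction hP with
  | refl => exact ⟨P, normalIn_refl P, hPp, le_rfl⟩
  | @tail A M _ hAM ih =>
    obtain ⟨W₀, hW₀A, hW₀p, hPW₀⟩ := ih
    obtain ⟨W, hW₀W, ⟨hWA, hWp⟩, hWmax⟩ := exists_maximal_ge_of_wellFoundedGT
      (fun X => NormalIn X A ∧ IsPGroup p X) W₀ ⟨hW₀A, hW₀p⟩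
    -- by maximality, `W` contains its `M`-conjugates, which are `p`-subgroups normal in `A`
    have hconj : ∀ m ∈ M, W.map (MulAut.conj m).toMonoidHom ≤ W := fun m hm => by
      have hWmA : NormalIn (W.map (MulAut.conj m).toMonoidHom) A :=
        hAM.map_conj_eq hm ▸ hWA.map _
      exact le_sup_right.trans <| hWmax ⟨hWA.sup hWmA, hWp.to_sup_of_normal_right'
        (hWp.map _) (hWA.1.trans (normalIn_iff_le_normalizer.1 hWmA).2)⟩ le_sup_left
    exact ⟨W, ⟨hWA.1.trans hAM.1, fun m hm w hw => hconj m hm ⟨w, hw, rfl⟩⟩, hWp,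
      hPW₀.trans hW₀W⟩

end Subnormal

section PiGroup

open Subgroup

variable {π : Set ℕ} {Γ Δ : Type*} [Group Γ] [Group Δ] {A B K P S : Subgroup Γ}

lemma IsPiGroup.of_card_dvd {B : Subgroup Δ} (hB : IsPiGroup π B)
    (h : Nat.card A ∣ Nat.card B) : IsPiGroup π A :=
  fun q hq hqA => hB q hq (hqA.trans h)

lemma IsPiMaximal.subgroupOf (hK : IsPiMaximal π K) (hKS : K ≤ S) :
    IsPiMaximal π (K.subgroupOf S) := by
  have hmap : (K.subgroupOf S).map S.subtype = K := by
    rw [subgroupOf_map_subtype, inf_eq_left.2 hKS]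
  have hcard : ∀ X : Subgroup S, Nat.card (X.map S.subtype) = Nat.card X :=
    fun X => card_map_of_injective S.subtype_injective
  refine ⟨hK.1.of_card_dvd (by rw [← hcard, hmap]), fun Q hQ hKQ => ?_⟩
  refine map_injective S.subtype_injective (hmap.trans (hK.2 _ ?_ ?_).symm).symm
  · exact hQ.of_card_dvd (hcard Q).dvd
  · exact hmap ▸ map_mono hKQ

lemma IsPiGroup.sup_of_le_normalizer (hA : IsPiGroup π A) (hB : IsPiGroup π B)
    (h : A ≤ normalizer (B : Set Γ)) : IsPiGroup π (A ⊔ B) := by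
  have := normal_subgroupOf_of_le_normalizer h
  have := normal_subgroupOf_sup_of_le_normalizer h
  have hcard : Nat.card (A ⊔ B : Subgroup Γ) ∣ Nat.card A * Nat.card B := by
    have hB' : Nat.card (B.subgroupOf (A ⊔ B)) = Nat.card B :=
      Nat.card_congr (subgroupOfEquivOfLe le_sup_right).toEquiv
    rw [card_eq_card_quotient_mul_card_subgroup (B.subgroupOf (A ⊔ B)), hB', ← Nat.card_congr
      (QuotientGroup.quotientInfEquivProdNormalizerQuotient A B h).toEquiv]
    exact Nat.mul_dvd_mul (card_quotient_dvd_card _) dvd_rfl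
  intro q hq hqAB
  rcases (Nat.Prime.dvd_mul hq).1 (hqAB.trans hcard) with hqA | hqB
  exacts [hA q hq hqA, hB q hq hqB]

lemma IsPiMaximal.le_of_le_normalizer {T : Subgroup Γ} (hK : IsPiMaximal π K)
    (hT : IsPiGroup π T) (h : K ≤ normalizer (T : Set Γ)) : T ≤ K :=
  le_sup_right.trans (hK.2 _ (hK.1.sup_of_le_normalizer hT h) le_sup_left).le

variable [Finite Γ]

lemma IsPGroup.isPiGroup {p : ℕ} (hA : IsPGroup p A) (hp : p.Prime) (hpπ : p ∈ π) :
    IsPiGroup π A := by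
  have := Fact.mk hp
  obtain ⟨n, hn⟩ := IsPGroup.iff_card.1 hA
  intro q hq hqA
  rw [hn] at hqA
  rwa [(Nat.prime_dvd_prime_iff_eq hq hp).1 (hq.dvd_of_dvd_pow hqA)]

lemma IsPGroup.coprime_card_of_isPiGroup {r : ℕ} (hA : IsPGroup r A) (hr : r.Prime)
    (hrπ : r ∉ π) {B : Subgroup Δ} (hB : IsPiGroup π B) :
    Nat.Coprime (Nat.card A) (Nat.card B) := by
  have := Fact.mk hr
  obtain ⟨n, hn⟩ := IsPGroup.iff_card.1 hA
  rw [hn]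
  exact Nat.Coprime.pow_left n ((Nat.Prime.coprime_iff_not_dvd hr).2 fun h => hrπ (hB r hr h))

lemma exists_isPiMaximal_ge (hP : IsPiGroup π P) : ∃ K ≥ P, IsPiMaximal π K := by
  obtain ⟨K, hPK, hK⟩ := exists_maximal_ge_of_wellFoundedGT (IsPiGroup π) P hP
  exact ⟨K, hPK, hK.1, fun X hX hKX => hK.eq_of_ge hX hKX⟩

end PiGroup

section MinimalNormal

open Subgroup

variable {Γ : Type*} [Group Γ] {N U : Subgroup Γ}

lemma IsMinimalNormal.le_of_inf_ne_bot (hU : IsMinimalNormal U) (hN : N.Normal)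
    (h : U ⊓ N ≠ ⊥) : U ≤ N :=
  have := hU.1
  ((hU.2.2 _ inferInstance inf_le_left).resolve_left h).ge.trans inf_le_right

lemma exists_isMinimalNormal_le [Finite Γ] (hN : N.Normal) (hne : N ≠ ⊥) :
    ∃ E ≤ N, IsMinimalNormal E := by
  obtain ⟨E, hEN, hE⟩ := (normalIn_top_iff.2 hN).exists_isMinimalNormalIn_le hne
  exact ⟨E, hEN, isMinimalNormal_iff_isMinimalNormalIn_top.2 hE⟩

lemma IsMinimalNormal.isPGroup_of_le_centralizer [Finite Γ] (hU : IsMinimalNormal U)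
    (hUU : U ≤ centralizer (U : Set Γ)) {r : ℕ} (hr : r.Prime) (hrU : r ∣ Nat.card U) :
    IsPGroup r U := by
  have hcomm : ∀ {a b : Γ}, a ∈ U → b ∈ U → Commute a b := fun ha hb => hUU hb _ ha
  let Ur : Subgroup Γ :=
    { carrier := {x | x ∈ U ∧ x ^ r = 1}
      one_mem' := ⟨U.one_mem, one_pow r⟩
      mul_mem' := fun ⟨ha, har⟩ ⟨hb, hbr⟩ =>
        ⟨U.mul_mem ha hb, by rw [(hcomm ha hb).mul_pow, har, hbr, one_mul]⟩
      inv_mem' := fun ⟨ha, har⟩ => ⟨U.inv_mem ha, by rw [inv_pow, har, inv_one]⟩ }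
  have hUrn : Ur.Normal :=
    ⟨fun a ⟨ha, har⟩ g => ⟨hU.1.conj_mem a ha g, by rw [conj_pow, har, mul_one, mul_inv_cancel]⟩⟩
  have hUr : Ur ≠ ⊥ := by
    have := Fact.mk hr
    obtain ⟨x, hx⟩ := exists_prime_orderOf_dvd_card' (G := U) r hrU
    rw [← orderOf_coe] at hx
    intro h
    have hxUr : (x : Γ) ∈ Ur := ⟨x.2, hx ▸ pow_orderOf_eq_one _⟩
    rw [h, mem_bot] at hxUr
    rw [hxUr, orderOf_one] at hx
    exact hr.one_lt.ne hx
  have hUrU : Ur = U := (hU.2.2 Ur hUrn fun x hx => hx.1).resolve_left hUr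
  intro x
  have hx : (x : Γ) ∈ Ur := hUrU.symm ▸ x.2
  exact ⟨1, Subtype.ext (by simpa using hx.2)⟩

lemma map_le_of_inf_range_ne_bot {G : Type*} [Group G] [Finite G] {V : Subgroup G}
    (hV : ∀ E : Subgroup G, IsMinimalNormal E → E = V) {ε : G →* Γ} (hU : U.Normal)
    (hUR : U ⊓ ε.range ≠ ⊥) : V.map ε ≤ U := by
  have hD : U.comap ε ≠ ⊥ := fun h => hUR <| eq_bot_iff.2 fun x ⟨hxU, g, hg⟩ => by
    have hg1 : g ∈ U.comap ε := by rwa [mem_comap, hg]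
    rw [h, mem_bot] at hg1
    rw [mem_bot, ← hg, hg1, map_one]
  obtain ⟨E, hEU, hE⟩ := exists_isMinimalNormal_le (hU.comap ε) hD
  exact map_le_iff_le_comap.2 (hV E hE ▸ hEU)

end MinimalNormal

section Quotient

open Subgroup

lemma exists_subgroup_forall_coprime_orderOf_mem {X : Type*} [Group X] [Finite X]
    {U : Subgroup X} (hU : U ≤ center X) (hcop : Nat.Coprime (Nat.card U) U.index) :
    ∃ T : Subgroup X, Nat.card T = U.index ∧
      ∀ x : X, Nat.Coprime (orderOf x) (Nat.card U) → x ∈ T := by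
  have : U.Normal :=
    ⟨fun u hu g => by rwa [mem_center_iff.1 (hU hu) g, mul_inv_cancel_right]⟩
  obtain ⟨T, hT⟩ := exists_right_complement'_of_coprime hcop
  refine ⟨T, hT.symm.index_eq_card.symm, fun x hx => ?_⟩
  obtain ⟨u, hu, t, ht, rfl⟩ := mem_sup_of_normal_left.1 (hT.sup_eq_top ▸ mem_top x)
  -- writing `x = u * t` with `u` central, `u ^ orderOf x ∈ U ⊓ T = ⊥`
  have hut : Commute u t := (mem_center_iff.1 (hU hu) t).symm
  have hpow : u ^ orderOf (u * t) = (t ^ orderOf (u * t))⁻¹ :=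
    eq_inv_of_mul_eq_one_left (by rw [← hut.mul_pow, pow_orderOf_eq_one])
  have hu1 : orderOf u = 1 := Nat.eq_one_of_dvd_coprimes hx
    (orderOf_dvd_of_pow_eq_one (disjoint_def.1 hT.disjoint (pow_mem hu _)
      (hpow ▸ inv_mem (pow_mem ht _))))
    (U.orderOf_dvd_natCard hu)
  rwa [orderOf_eq_one_iff.1 hu1, one_mul]

variable {π : Set ℕ} {Γ : Type*} [Group Γ] [Finite Γ] {K R U : Subgroup Γ} [U.Normal]
  {Kb : Subgroup (Γ ⧸ U)}

lemma inf_comap_mk'_le_of_isPiMaximal (hK : IsPiMaximal π K) (hKb : IsPiMaximal π Kb)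
    (hKKb : K.map (QuotientGroup.mk' U) ≤ Kb) (hUR : U ⊓ R = ⊥)
    (hRC : R ≤ centralizer (U : Set Γ)) (hUC : U ≤ centralizer (U : Set Γ)) {r : ℕ}
    (hU : IsPGroup r U) (hr : r.Prime) (hrπ : r ∉ π) :
    R ⊓ Kb.comap (QuotientGroup.mk' U) ≤ K := by
  -- `U` is a central Hall subgroup of `X = L ⊓ C_Γ(U)`; the `π`-elements of `X` form a complement
  -- `T`, which is normalized by `L ≥ K`, so `T ≤ K`; and `R ⊓ L` consists of `π`-elements of `X`.
  set L := Kb.comap (QuotientGroup.mk' U)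
  set X := L ⊓ centralizer (U : Set Γ)
  have hdvd : ∀ Y ≤ L, U.relIndex Y ∣ Nat.card Kb := fun Y hY => by
    have hY' := relIndex_ker Y (QuotientGroup.mk' U)
    rw [QuotientGroup.ker_mk'] at hY'
    exact hY' ▸ card_dvd_of_le ((map_mono hY).trans (map_comap_le _ _))
  have hcop : Nat.Coprime (Nat.card U) (Nat.card Kb) := hU.coprime_card_of_isPiGroup hr hrπ hKb.1
  have hUX : U ≤ X := le_inf (fun u hu => by simp [L, (QuotientGroup.eq_one_iff u).2 hu]) hUC
  have hcardU : Nat.card (U.subgroupOf X) = Nat.card U :=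
    Nat.card_congr (subgroupOfEquivOfLe hUX).toEquiv
  obtain ⟨T₀, hT₀card, hT₀⟩ := exists_subgroup_forall_coprime_orderOf_mem (U := U.subgroupOf X)
    (fun u hu => mem_center_iff.2 fun x => Subtype.ext (mem_centralizer_iff.1 x.2.2 _ hu).symm)
    (hcardU ▸ hcop.coprime_dvd_right (hdvd X inf_le_left))
  set T := T₀.map X.subtype
  have hTX : T ≤ X := map_subtype_le T₀
  have hTcard : Nat.card T ∣ Nat.card Kb := by
    rw [card_map_of_injective X.subtype_injective, hT₀card]
    exact hdvd X inf_le_left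
  have hmemT : ∀ x ∈ X, (orderOf x).Coprime (Nat.card U) → x ∈ T := fun x hx h =>
    ⟨⟨x, hx⟩, hT₀ _ (by rwa [orderOf_mk, hcardU]), rfl⟩
  have hcopT : ∀ {x}, x ∈ T → (orderOf x).Coprime (Nat.card U) := fun hx =>
    (hcop.coprime_dvd_right ((T.orderOf_dvd_natCard hx).trans hTcard)).symm
  have hLT : L ≤ normalizer (T : Set Γ) := fun l hl => mem_normalizer_fintype fun t ht => by
    refine hmemT _ (mem_inf.2 ⟨mul_mem (mul_mem hl (mem_inf.1 (hTX ht)).1) (inv_mem hl), ?_⟩) ?_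
    · exact (normal_centralizer (H := U)).conj_mem t (mem_inf.1 (hTX ht)).2 l
    · exact (MulEquiv.orderOf_eq (MulAut.conj l) t).symm ▸ hcopT ht
  have hTK : T ≤ K := hK.le_of_le_normalizer (hKb.1.of_card_dvd hTcard)
    ((map_le_iff_le_comap.1 hKKb).trans hLT)
  refine fun x hx => hTK (hmemT x ⟨hx.2, hRC hx.1⟩ ?_)
  have hRL : U.relIndex (R ⊓ L) = Nat.card (R ⊓ L : Subgroup Γ) := by
    rw [← inf_relIndex_right, le_bot_iff.1 ((inf_le_inf_left U inf_le_left).trans hUR.le),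
      relIndex_bot_left]
  exact (hcop.coprime_dvd_right (((R ⊓ L).orderOf_dvd_natCard hx).trans
    (hRL ▸ hdvd _ inf_le_right))).symm

end Quotient

section Witness

open Subgroup

universe u

variable {π : Set ℕ} {G Gstar : Type u} [Group G] [Group Gstar] [Finite Gstar] {H : Subgroup G}
  {ε : G →* Gstar} {K : Subgroup Gstar}

def PiSubmaximalWitness.ofEqComap (ε : G →* Gstar) (hinj : Function.Injective ε)
    (hsub : _root_.IsSubnormal ε.range) (hK : IsPiMaximal π K) (hH : H = K.comap ε) :
    PiSubmaximalWitness π G H where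
  carrier := Gstar
  ε := ε
  inj := hinj
  subnormal := hsub
  K := K
  maxK := hK
  eq := by rw [hH, map_comap_eq]

lemma range_sup_eq_top_of_minimal (hinj : Function.Injective ε)
    (hsub : _root_.IsSubnormal ε.range) (hK : IsPiMaximal π K) (hH : H = K.comap ε)
    (hmin : ∀ w : PiSubmaximalWitness π G H, Nat.card Gstar ≤ Nat.card w.carrier) :
    ε.range ⊔ K = ⊤ := by
  set S := ε.range ⊔ K
  let εS : G →* S := ε.codRestrict S fun g => le_sup_left (a := ε.range) ⟨g, rfl⟩
  have hrange : εS.range = ε.range.subgroupOf S := by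
    ext x
    exact ⟨fun ⟨g, hg⟩ => ⟨g, congrArg Subtype.val hg⟩, fun ⟨g, hg⟩ => ⟨g, Subtype.ext hg⟩⟩
  have hsubS : _root_.IsSubnormal εS.range := by
    rw [hrange, isSubnormal_iff_subgroup_isSubnormal]
    exact (isSubnormal_iff_subgroup_isSubnormal.1 hsub).subgroupOf
  let w := PiSubmaximalWitness.ofEqComap εS (fun a b h => hinj (congrArg Subtype.val h)) hsubS
    (hK.subgroupOf le_sup_right) hH
  exact eq_top_of_card_eq S (le_antisymm (card_le_card_group S) (hmin w))

lemma exists_witness_card_eq_quotient (hinj : Function.Injective ε)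
    (hsub : _root_.IsSubnormal ε.range) (hK : IsPiMaximal π K) (hH : H = K.comap ε)
    {U : Subgroup Gstar} [U.Normal] (hUR : U ⊓ ε.range = ⊥)
    (hRC : ε.range ≤ centralizer (U : Set Gstar)) (hUC : U ≤ centralizer (U : Set Gstar))
    {r : ℕ} (hU : IsPGroup r U) (hr : r.Prime) (hrπ : r ∉ π) :
    ∃ w : PiSubmaximalWitness π G H, Nat.card w.carrier = Nat.card (Gstar ⧸ U) := by
  set ρ := QuotientGroup.mk' U
  obtain ⟨Kb, hKKb, hKb⟩ := exists_isPiMaximal_ge (hK.1.of_card_dvd (card_map_dvd K ρ))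
  have hinj' : Function.Injective (ρ.comp ε) :=
    (injective_iff_map_eq_one _).2 fun g hg => (map_eq_one_iff ε hinj).1 <| by
      have hg' : ε g ∈ U ⊓ ε.range := ⟨(QuotientGroup.eq_one_iff _).1 hg, g, rfl⟩
      rwa [hUR, mem_bot] at hg'
  have hsub' : _root_.IsSubnormal (ρ.comp ε).range := by
    rw [MonoidHom.range_comp, isSubnormal_iff_subgroup_isSubnormal]
    exact (isSubnormal_iff_subgroup_isSubnormal.1 hsub).map (QuotientGroup.mk'_surjective U)
  have hH' : H = Kb.comap (ρ.comp ε) := hH.trans <| le_antisymm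
    (comap_mono (map_le_iff_le_comap.1 hKKb)) fun g hg =>
      inf_comap_mk'_le_of_isPiMaximal hK hKb hKKb hUR hRC hUC hU hr hrπ ⟨⟨g, rfl⟩, hg⟩
  exact ⟨.ofEqComap _ hinj' hsub' hKb hH', rfl⟩

lemma IsMinimalNormal.isPiGroup_of_inf_range_eq_bot (hinj : Function.Injective ε)
    (hsub : _root_.IsSubnormal ε.range) (hK : IsPiMaximal π K) (hH : H = K.comap ε)
    (hmin : ∀ w : PiSubmaximalWitness π G H, Nat.card Gstar ≤ Nat.card w.carrier)
    (htop : ε.range ⊔ K = ⊤) {U : Subgroup Gstar} (hU : IsMinimalNormal U)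
    (hUR : U ⊓ ε.range = ⊥) : IsPiGroup π U := by
  have := hU.1
  set C := centralizer (U : Set Gstar)
  have hRC : ε.range ≤ C := fun x hx u hu =>
    (commute_of_inf_eq_bot ((isMinimalNormal_iff_isMinimalNormalIn_top.1 hU).le_normalizer hsub)
      le_normalizer_of_normal hUR hu hx).eq
  have hCK : C.index ∣ Nat.card K := by
    have hKC : K ⊔ C = ⊤ := top_le_iff.1 (htop ▸ sup_comm K C ▸ sup_le_sup_right hRC K)
    rw [← relIndex_top_right, ← hKC, relIndex_sup_right]
    exact relIndex_dvd_card C K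
  rcases hU.2.2 (U ⊓ C) (inferInstance : (U ⊓ C).Normal) inf_le_left with hUC | hUC
  · have hUcard : Nat.card U = C.relIndex U := by
      rw [← inf_relIndex_right, inf_comm, hUC, relIndex_bot_left]
    exact hK.1.of_card_dvd (hUcard ▸ (relIndex_dvd_index_of_normal _ _).trans hCK)
  · by_contra hπ
    obtain ⟨r, hr, hrU, hrπ⟩ : ∃ r, r.Prime ∧ r ∣ Nat.card U ∧ r ∉ π := by
      simpa [IsPiGroup] using hπ
    have hUC' : U ≤ C := hUC ▸ inf_le_right
    obtain ⟨w, hw⟩ := exists_witness_card_eq_quotient hinj hsub hK hH hUR hRC hUC'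
      (hU.isPGroup_of_le_centralizer hUC' hr hrU) hr hrπ
    have hle := hw ▸ hmin w
    have hU2 : 1 < Nat.card U := (one_lt_card_iff_ne_bot U).2 hU.2.1
    have hQ : 0 < Nat.card (Gstar ⧸ U) := Nat.card_pos
    rw [card_eq_card_quotient_mul_card_subgroup U] at hle
    nlinarith

end Witness

theorem stmt12_general {G : Type} [Group G] [Finite G] (π : Set ℕ) (p : ℕ)
    (hp : p.Prime) (hpπ : p ∈ π)
    (V : Subgroup G)
    (hVmin : IsMinimalNormal V)
    (hVuniq : ∀ U : Subgroup G, IsMinimalNormal U → U = V)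
    (hVp : IsPGroup p V)
    (H : Subgroup G)
    (Gstar : Type) [Group Gstar] [Finite Gstar]
    (ε : G →* Gstar) (hinj : Function.Injective ε) (hsub : IsSubnormal ε.range)
    (K : Subgroup Gstar) (hK : IsPiMaximal π K) (heq : H.map ε = ε.range ⊓ K)
    (hmin : ∀ w : PiSubmaximalWitness π G H, Nat.card Gstar ≤ Nat.card w.carrier) :
    ∀ U : Subgroup Gstar, IsMinimalNormal U → IsPiGroup π U ∧ U ≤ K := by
  have hHK : H = K.comap ε := Subgroup.map_injective hinj (by rw [heq, Subgroup.map_comap_eq])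
  have htop := range_sup_eq_top_of_minimal hinj hsub hK hHK hmin
  have hVsub : IsSubnormal (V.map ε) :=
    hsub.head (ε.range_eq_map ▸ (normalIn_top_iff.2 hVmin.1).map ε)
  obtain ⟨W, hW, hWp, hVW⟩ := exists_normalIn_isPGroup_ge hVsub (hVp.map ε)
  intro U hU
  have := hU.1
  have hUπ : IsPiGroup π U := by
    by_cases hUR : U ⊓ ε.range = ⊥
    · exact hU.isPiGroup_of_inf_range_eq_bot hinj hsub hK hHK hmin htop hUR
    have hVUW : V.map ε ≤ U ⊓ W := le_inf (map_le_of_inf_range_ne_bot hVuniq hU.1 hUR) hVW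
    have hUW : U ≤ W := hU.le_of_inf_ne_bot (normalIn_top_iff.1 hW) fun h =>
      hVmin.2.1 ((Subgroup.map_eq_bot_iff_of_injective V hinj).1 (le_bot_iff.1 (h ▸ hVUW)))
    exact (hWp.to_le hUW).isPiGroup hp hpπ
  exact ⟨hUπ, hK.le_of_le_normalizer hUπ Subgroup.le_normalizer_of_normal⟩

/-- In the minimal counterexample setup, every minimal normal subgroup of `G*` is a
`π`-group and is contained in `K`. -/
theorem stmt12 {G : Type} [Group G] [Finite G] (π : Set ℕ) (p : ℕ)
    (hp : p.Prime) (hpπ : p ∈ π)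
    (V : Subgroup G) [nV : V.Normal]
    (hVmin : IsMinimalNormal V)
    (hVuniq : ∀ U : Subgroup G, IsMinimalNormal U → U = V)
    (hVp : IsPGroup p V)
    (hVZ : ¬ V ≤ Subgroup.center G)
    (hsimple : IsSimpleGroup (G ⧸ V))
    (hnonab : ∃ a b : G ⧸ V, a * b ≠ b * a)
    (H : Subgroup G) (hH : IsPiSubmaximal π H)
    (Gstar : Type) [Group Gstar] [Finite Gstar]
    (ε : G →* Gstar) (hinj : Function.Injective ε) (hsub : IsSubnormal ε.range)
    (K : Subgroup Gstar) (hK : IsPiMaximal π K) (heq : H.map ε = ε.range ⊓ K)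
    (hmin : ∀ w : PiSubmaximalWitness π G H, Nat.card Gstar ≤ Nat.card w.carrier) :
    ∀ U : Subgroup Gstar, IsMinimalNormal U → IsPiGroup π U ∧ U ≤ K :=
  stmt12_general π p hp hpπ V hVmin hVuniq hVp H Gstar ε hinj hsub K hK heq hmin
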